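/- On Diamond(5) under 8-move solitaire, the Merson-region heuristic h₃(B) = (number of completely filled Merson regions of B) is an admissible lower bound on the number of moves needed to reach any single-peg position from B: each filled region requires at least one move originating inside it, and distinct filled regions require distinct such moves. -/

import Mathlib

open Finset

abbrev Cell := ℤ × ℤ
abbrev Pos := Finset Cell

/-- The four orthogonal jump directions (4-move solitaire). -/
def dirs4 : Finset Cell := {(1,0),(-1,0),(0,1),(0,-1)}

/-- The eight jump directions (8-move solitaire). -/
def dirs8 : Finset Cell :=
  {(1,0),(-1,0),(0,1),(0,-1),(1,1),(1,-1),(-1,1),(-1,-1)}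

/-- A legal jump on `board` with allowed directions `dirs`, taking position `B` to `B'`:
the peg at `p` jumps over the peg at `p + d` into the empty hole `p + d + d`,
removing the jumped peg. -/
def IsJump (board dirs : Finset Cell) (B B' : Pos) (p d : Cell) : Prop :=
  d ∈ dirs ∧ p ∈ B ∧ p + d ∈ B ∧ p + d + d ∈ board ∧ p + d + d ∉ B ∧
    B' = insert (p + d + d) ((B.erase p).erase (p + d))

/-- A move: one or more consecutive jumps by the same peg, starting at `p` and ending at `q`. -/
inductive Move (board dirs : Finset Cell) : Pos → Pos → Cell → Cell → Prop
  | single {B B' : Pos} {p d : Cell} (h : IsJump board dirs B B' p d) :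
      Move board dirs B B' p (p + d + d)
  | cons {B B' B'' : Pos} {p d q : Cell} (h : IsJump board dirs B B' p d)
      (hm : Move board dirs B' B'' (p + d + d) q) : Move board dirs B B'' p q

/-- A sequence of moves, recorded as a list of (start hole, end hole) pairs. -/
inductive MoveSeq (board dirs : Finset Cell) : Pos → Pos → List (Cell × Cell) → Prop
  | nil (B : Pos) : MoveSeq board dirs B B []
  | cons {B B' B'' : Pos} {p q : Cell} {l : List (Cell × Cell)}
      (h : Move board dirs B B' p q) (hs : MoveSeq board dirs B' B'' l) :
      MoveSeq board dirs B B'' ((p, q) :: l)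

/-- The diamond board of "radius" r : all integer points with |x|+|y| ≤ r. -/
noncomputable def diamondB (r : ℤ) : Finset Cell :=
  ((Finset.Icc (-r) r) ×ˢ (Finset.Icc (-r) r)).filter (fun p => |p.1| + |p.2| ≤ r)

/-- The standard 33-hole cross-shaped board. -/
noncomputable def board33 : Finset Cell :=
  ((Finset.Icc (-3 : ℤ) 3) ×ˢ (Finset.Icc (-3 : ℤ) 3)).filter
    (fun p => |p.1| ≤ 1 ∨ |p.2| ≤ 1)

/-- The 37-hole board (7×7 square minus three holes at each corner). -/
noncomputable def board37 : Finset Cell :=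
  ((Finset.Icc (-3 : ℤ) 3) ×ˢ (Finset.Icc (-3 : ℤ) 3)).filter
    (fun p => |p.1| ≤ 1 ∨ |p.2| ≤ 1 ∨ (|p.1| ≤ 2 ∧ |p.2| ≤ 2))

/-- The central 3×3 block of nine holes. -/
noncomputable def C9 : Finset Cell := (Finset.Icc (-1 : ℤ) 1) ×ˢ (Finset.Icc (-1 : ℤ) 1)

/-- `S` is a Merson region: if `S` is entirely occupied, no jump starting outside `S`
can remove a peg of `S`. -/
def MersonRegion (board dirs : Finset Cell) (S : Finset Cell) : Prop :=
  ∀ (B B' : Pos) (p d : Cell), S ⊆ B → IsJump board dirs B B' p d → p ∉ S → S ⊆ B'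

/-- The 41-hole Diamond(5) board. -/
noncomputable def diamond5 : Finset Cell := diamondB 4

/-! A full Merson region can only lose a peg through a move that starts inside it, and a move
starting outside it also ends outside it, since it lands on an empty hole. So if no move starts in
a filled nonempty region, the region is still full after the last move, whose peg lies outside it:
the game cannot end with one peg. Disjoint regions need distinct such moves. -/

variable {board dirs : Finset Cell}

theorem Move.mersonRegion_subset {B B' : Pos} {p q : Cell} (h : Move board dirs B B' p q)
    {S : Finset Cell} (hS : MersonRegion board dirs S) (hSB : S ⊆ B) (hp : p ∉ S) :
    S ⊆ B' ∧ q ∉ S := by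
  induction h with
  | @single B B' p d hj => exact ⟨hS B B' p d hSB hj hp, fun hq => hj.2.2.2.2.1 (hSB hq)⟩
  | @cons B B' B'' p d q hj _ ih =>
    exact ih (hS B B' p d hSB hj hp) fun hq => hj.2.2.2.2.1 (hSB hq)

theorem Move.end_mem {B B' : Pos} {p q : Cell} (h : Move board dirs B B' p q) : q ∈ B' := by
  induction h with
  | single hj => rw [hj.2.2.2.2.2]; exact mem_insert_self _ _
  | cons _ _ ih => exact ih

theorem MoveSeq.exists_start_mem_of_mersonRegion {B F : Pos} {l : List (Cell × Cell)}
    (h : MoveSeq board dirs B F l) (hF : F.card ≤ 1) (hl : l ≠ []) {S : Finset Cell}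
    (hS : MersonRegion board dirs S) (hne : S.Nonempty) (hSB : S ⊆ B) :
    ∃ pq ∈ l, pq.1 ∈ S := by
  induction h with
  | nil => exact absurd rfl hl
  | @cons B B' B'' p q l' hmv hs ih =>
    by_cases hp : p ∈ S
    · exact ⟨(p, q), List.mem_cons_self, hp⟩
    obtain ⟨hSB', hq⟩ := hmv.mersonRegion_subset hS hSB hp
    cases l' with
    | nil =>
      cases hs
      obtain ⟨s, hs⟩ := hne
      have : 1 < B'.card := one_lt_card.2 ⟨s, hSB' hs, q, hmv.end_mem, fun hsq => hq (hsq ▸ hs)⟩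
      omega
    | cons a l'' =>
      obtain ⟨pq, hpq, hpqS⟩ := ih hF (List.cons_ne_nil a l'') hSB'
      exact ⟨pq, List.mem_cons_of_mem _ hpq, hpqS⟩

theorem MoveSeq.ne_nil_of_card_ne {B F : Pos} {l : List (Cell × Cell)}
    (h : MoveSeq board dirs B F l) (hBF : B.card ≠ F.card) : l ≠ [] := by
  rintro rfl
  cases h
  exact hBF rfl

theorem card_le_length_of_disjoint_of_forall_exists_mem {α : Type*} [DecidableEq α] (𝒮 : Finset (Finset α))
    (hdisj : ∀ R ∈ 𝒮, ∀ S ∈ 𝒮, R ≠ S → Disjoint R S) (l : List α)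
    (hmeet : ∀ S ∈ 𝒮, ∃ a ∈ l, a ∈ S) : 𝒮.card ≤ l.length := by
  calc 𝒮.card ≤ l.toFinset.card := by
        refine card_le_card_of_forall_subsingleton (fun S a => a ∈ S)
          (fun S hS => by simpa using hmeet S hS) fun a _ R hR S hS => ?_
        by_contra hRS
        exact disjoint_left.1 (hdisj R hR.1 S hS.1 hRS) hR.2 hS.2
    _ ≤ l.length := l.toFinset_card_le

theorem stmt_18_general (regions : Finset (Finset Cell))
    (hM : ∀ R ∈ regions, MersonRegion diamond5 dirs8 R)
    (hne : ∀ R ∈ regions, R.Nonempty)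
    (hdisj : ∀ R ∈ regions, ∀ S ∈ regions, R ≠ S → Disjoint R S)
    (B : Pos) (t : Cell)
    (l : List (Cell × Cell)) (h : MoveSeq diamond5 dirs8 B {t} l) :
    (if B.card = 1 then 0 else (regions.filter (fun R => R ⊆ B)).card) ≤ l.length := by
  split_ifs with hB
  · exact Nat.zero_le _
  have hl : l ≠ [] := h.ne_nil_of_card_ne (by rwa [card_singleton])
  rw [← List.length_map Prod.fst]
  refine card_le_length_of_disjoint_of_forall_exists_mem _
    (fun R hR S hS => hdisj R (mem_filter.1 hR).1 S (mem_filter.1 hS).1) _ fun R hR => ?_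
  obtain ⟨hR, hRB⟩ := mem_filter.1 hR
  obtain ⟨pq, hpq, hpR⟩ :=
    h.exists_start_mem_of_mersonRegion (card_singleton t).le hl (hM R hR) (hne R hR) hRB
  exact ⟨pq.1, List.mem_map_of_mem hpq, hpR⟩

/-- on Diamond(5) under 8-move solitaire, for any family of pairwise disjoint
nonempty Merson regions, the heuristic h₃(B) = number of regions completely filled by `B`
(overridden to 0 when `B` has exactly one peg) is an admissible lower bound on the number
of moves needed to reach any single-peg position from `B`. -/
theorem stmt_18 (regions : Finset (Finset Cell))
    (hM : ∀ R ∈ regions, MersonRegion diamond5 dirs8 R)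
    (hne : ∀ R ∈ regions, R.Nonempty)
    (hdisj : ∀ R ∈ regions, ∀ S ∈ regions, R ≠ S → Disjoint R S)
    (B : Pos) (hB : B ⊆ diamond5) (t : Cell) (ht : t ∈ diamond5)
    (l : List (Cell × Cell)) (h : MoveSeq diamond5 dirs8 B {t} l) :
    (if B.card = 1 then 0 else (regions.filter (fun R => R ⊆ B)).card) ≤ l.length :=
  stmt_18_general regions hM hne hdisj B t l h
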